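/- arXiv:2301.08285 — 2 statements merged into one kernel-verified Lean document; each statement's English description precedes it below -/
import Mathlib

section
/- Let H = ⊕_{i∈I} H_i be a Hilbert space direct sum, π_i : A → B(H_i) *-representations, π = ⊕ π_i, and φ : A → B(H) a unital completely positive map such that P_i φ(t) P_i = π(t) P_i for every i ∈ I and t ∈ A, where P_i is the orthogonal projection onto H_i. Then φ = π. -/
/-- A linear map `φ` from a C*-algebra into `B(H)` is completely positive if all the
operator matrices `(φ(b_i* b_j))_{ij}` are positive, expressed via quadratic forms. -/
def IsCompletelyPositive {B H : Type*} [NormedRing B] [StarRing B] [CStarRing B]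
    [NormedAlgebra ℂ B] [StarModule ℂ B] [CompleteSpace B]
    [NormedAddCommGroup H] [InnerProductSpace ℂ H] [CompleteSpace H]
    (φ : B →L[ℂ] (H →L[ℂ] H)) : Prop :=
  ∀ (n : ℕ) (b : Fin n → B) (d : Fin n → (H →L[ℂ] H)),
    0 ≤ ∑ i, ∑ j, star (d i) * φ (star (b i) * b j) * d j

/-! Kadison–Schwarz gives `φ(t)* φ(t) ≤ φ(t* t)`. Compressing by `P_i` and using
`P_i φ(t* t) P_i = π(t* t) P_i = P_i φ(t)* P_i φ(t) P_i` turns this into `x* x ≤ 0` for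
`x = (1 - P_i) φ(t) P_i`, so `φ(t) P_i = P_i φ(t) P_i = π(t) P_i`; summing over `i` gives `φ = π`. -/

namespace IsCompletelyPositive

variable {B H : Type*} [NormedRing B] [StarRing B] [CStarRing B]
    [NormedAlgebra ℂ B] [StarModule ℂ B] [CompleteSpace B]
    [NormedAddCommGroup H] [InnerProductSpace ℂ H] [CompleteSpace H]
    {φ : B →L[ℂ] (H →L[ℂ] H)}

lemma add_add_add_nonneg (hcp : IsCompletelyPositive φ) (hu : φ 1 = 1) (t : B)
    (c : H →L[ℂ] H) :
    0 ≤ star c * c + star c * φ t + φ (star t) * c + φ (star t * t) := by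
  simpa [Fin.sum_univ_two, hu, add_assoc] using hcp 2 ![1, t] ![c, 1]

lemma map_star (hcp : IsCompletelyPositive φ) (hu : φ 1 = 1) (t : B) :
    φ (star t) = star (φ t) := by
  have hsa (c : H →L[ℂ] H) :
      IsSelfAdjoint (star c * c + star c * φ t + φ (star t) * c + φ (star t * t)) :=
    IsSelfAdjoint.of_nonneg (hcp.add_add_add_nonneg hu t c)
  have hsq : IsSelfAdjoint (φ (star t * t)) := by simpa using hsa 0
  have h1 := (hsa 1).star_eq
  have h2 := (hsa (Complex.I • 1)).star_eq
  simp only [star_add, star_one, star_smul, star_star, one_mul, mul_one,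
    smul_mul_assoc, mul_smul_comm, hsq.star_eq] at h1 h2
  simp only [Complex.star_def, Complex.conj_I, smul_smul, smul_neg, neg_mul, Complex.I_mul_I,
    neg_neg, one_smul, neg_smul] at h2
  have key : (2 * Complex.I) • star (φ t) = (2 * Complex.I) • φ (star t) := by
    linear_combination (norm := module) Complex.I • h1 + h2
  exact (smul_right_injective _ (mul_ne_zero two_ne_zero Complex.I_ne_zero) key).symm

lemma star_mul_le_map_star_mul (hcp : IsCompletelyPositive φ) (hu : φ 1 = 1) (t : B) :
    star (φ t) * φ t ≤ φ (star t * t) := by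
  have h := hcp.add_add_add_nonneg hu t (-φ t)
  rw [hcp.map_star hu] at h
  rw [← sub_nonneg]
  convert h using 1
  noncomm_ring

lemma mul_eq_of_compression_eq (hcp : IsCompletelyPositive φ) (hu : φ 1 = 1)
    {p : H →L[ℂ] H} (hp : IsStarProjection p) (π : B →⋆ₐ[ℂ] (H →L[ℂ] H))
    (hcompr : ∀ t, p * φ t * p = π t * p) (t : B) :
    φ t * p = π t * p := by
  have hpp : p * p = p := hp.isIdempotentElem.eq
  set x := φ t * p - p * φ t * p
  have hx : star x * x = p * (star (φ t) * φ t) * p - p * star (φ t) * p * φ t * p := by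
    have hxstar : star x = p * star (φ t) - p * star (φ t) * p := by
      simp only [x, star_sub, star_mul, hp.isSelfAdjoint.star_eq, mul_assoc]
    rw [hxstar]
    calc _ = p * (star (φ t) * φ t) * p - p * star (φ t) * p * φ t * p
          - p * star (φ t) * p * φ t * p + p * star (φ t) * (p * p) * φ t * p := by
          simp only [x]; noncomm_ring
      _ = _ := by rw [hpp]; abel
  have hπ : p * star (φ t) * p * φ t * p = p * φ (star t * t) * p := by
    calc p * star (φ t) * p * φ t * p = p * φ (star t) * p * (p * φ t * p) := by
          rw [hcp.map_star hu]; simp only [mul_assoc, ← mul_assoc p p, hpp]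
      _ = π (star t) * p * (p * φ t * p) := by rw [hcompr]
      _ = π (star t) * (p * φ t * p) := by simp only [mul_assoc, ← mul_assoc p p, hpp]
      _ = π (star t * t) * p := by rw [hcompr, map_mul, mul_assoc]
      _ = p * φ (star t * t) * p := (hcompr _).symm
  have hle : star x * x ≤ 0 := by
    rw [hx, hπ, sub_nonpos]
    exact hp.isSelfAdjoint.conjugate_le_conjugate (hcp.star_mul_le_map_star_mul hu t)
  have hx0 : x = 0 :=
    CStarRing.star_mul_self_eq_zero_iff x |>.mp (le_antisymm hle (star_mul_self_nonneg x))
  rw [← hcompr, ← sub_eq_zero]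
  exact hx0

end IsCompletelyPositive

theorem ContinuousLinearMap.eq_of_comp_eq_of_hasSum {𝕜 E F I : Type*}
    [NontriviallyNormedField 𝕜] [NormedAddCommGroup E] [NormedSpace 𝕜 E]
    [NormedAddCommGroup F] [NormedSpace 𝕜 F] {S T : E →L[𝕜] F} {P : I → E →L[𝕜] E}
    (hP : ∀ ξ, HasSum (fun i => P i ξ) ξ) (h : ∀ i, S ∘L P i = T ∘L P i) : S = T := by
  ext ξ
  have hS := (hP ξ).mapL S
  simp only [← ContinuousLinearMap.comp_apply, h] at hS
  exact hS.unique ((hP ξ).mapL T)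

theorem stmt5_general {A H I : Type*} [NormedRing A] [StarRing A] [CStarRing A]
    [NormedAlgebra ℂ A] [StarModule ℂ A] [CompleteSpace A]
    [NormedAddCommGroup H] [InnerProductSpace ℂ H] [CompleteSpace H]
    (P : I → (H →L[ℂ] H))
    (hPsa : ∀ i, star (P i) = P i) (hPidem : ∀ i, P i * P i = P i)
    (hPsum : ∀ ξ : H, HasSum (fun i => P i ξ) ξ)
    (π : A →⋆ₐ[ℂ] (H →L[ℂ] H))
    (φ : A →L[ℂ] (H →L[ℂ] H)) (hu : φ 1 = 1) (hcp : IsCompletelyPositive φ)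
    (hblock : ∀ i t, P i * φ t * P i = π t * P i) :
    ∀ t : A, φ t = π t := fun t =>
  ContinuousLinearMap.eq_of_comp_eq_of_hasSum hPsum fun i =>
    hcp.mul_eq_of_compression_eq hu ⟨hPidem i, hPsa i⟩ π (hblock i) t

/-- If `H = ⊕_{i∈I} H_i` (expressed via a family of mutually orthogonal projections `P i`
summing to the identity), `π` is a ⋆-representation which is the direct sum of
representations on the summands (it commutes with each `P i`), and `φ` is a unital
completely positive map whose compression to each summand agrees with `π`
(`P_i φ(t) P_i = π(t) P_i`), then `φ = π`. -/
theorem stmt5 {A H I : Type*} [NormedRing A] [StarRing A] [CStarRing A]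
    [NormedAlgebra ℂ A] [StarModule ℂ A] [CompleteSpace A]
    [NormedAddCommGroup H] [InnerProductSpace ℂ H] [CompleteSpace H]
    (P : I → (H →L[ℂ] H))
    (hPsa : ∀ i, star (P i) = P i) (hPidem : ∀ i, P i * P i = P i)
    (hPorth : ∀ i j, i ≠ j → P i * P j = 0)
    (hPsum : ∀ ξ : H, HasSum (fun i => P i ξ) ξ)
    (π : A →⋆ₐ[ℂ] (H →L[ℂ] H)) (hπu : π 1 = 1)
    (hcomm : ∀ i t, π t * P i = P i * π t)
    (φ : A →L[ℂ] (H →L[ℂ] H)) (hu : φ 1 = 1) (hcp : IsCompletelyPositive φ)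
    (hblock : ∀ i t, P i * φ t * P i = π t * P i) :
    ∀ t : A, φ t = π t :=
  stmt5_general P hPsa hPidem hPsum π φ hu hcp hblock
end

section
/- Let Γ : B → A be a surjective *-homomorphism from a C*-algebra B onto a C*-subalgebra A ⊆ B with Γ|_A = id_A, let π : C → A and ψ : C → B be maps from a C*-algebra C with Γ ∘ ψ = π, and let J be the smallest closed two-sided ideal of B containing the image of (ψ − π). Suppose B is generated as a C*-algebra by the image of ψ, and ψ, π are unital with π a *-homomorphism. Then ker Γ = J; that is, the kernel of Γ is exactly the closed ideal generated by {ψ(t) − π(t) : t ∈ C}. -/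
/-!
`J ⊆ ker Γ` because `ker Γ` is closed and `Γ (ψ t - π t) = 0`. Conversely, the set of `b` with
`b - Γ b ∈ J` contains `Im ψ`, is closed, and is a `⋆`-subalgebra: products are handled by
`x y - Γ (x y) = x (y - Γ y) + (x - Γ x) Γ y`, and stars because closed ideals of a C⋆-algebra are
self-adjoint (`x⋆` is the limit of `a (a + ε)⁻¹ x⋆ ∈ J` with `a = x⋆ x`, the error `ε (a + ε)⁻¹ x⋆`
having squared norm at most `ε / 4`). Hence it is all of `B`, and `Γ b = 0` gives `b ∈ J`.
-/

open scoped CStarAlgebra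

namespace TwoSidedIdeal

variable {R : Type*} [Ring R] [TopologicalSpace R]

lemma isClosed_ker {S F : Type*} [Ring S] [TopologicalSpace S] [T1Space S] [FunLike F R S]
    [RingHomClass F R S] [ContinuousMapClass F R S] (f : F) : IsClosed (ker f : Set R) := by
  convert isClosed_singleton.preimage (map_continuous f)
  exact Set.ext fun _ => mem_ker f

variable [IsTopologicalRing R]

def topologicalClosure (I : TwoSidedIdeal R) : TwoSidedIdeal R :=
  .mk' (closure (I : Set R)) (subset_closure I.zero_mem)
    (fun hx hy => map_mem_closure₂ continuous_add hx hy fun _ ha _ hb => I.add_mem ha hb)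
    (fun hx => map_mem_closure continuous_neg hx fun _ ha => I.neg_mem ha)
    (fun {x _} hy => map_mem_closure (continuous_const_mul x) hy fun _ ha =>
      I.mul_mem_left _ _ ha)
    (fun {_ y} hx => map_mem_closure (f := (· * y)) (continuous_mul_const y) hx fun _ ha =>
      I.mul_mem_right _ _ ha)

@[simp]
lemma coe_topologicalClosure (I : TwoSidedIdeal R) :
    (I.topologicalClosure : Set R) = closure I := by
  ext; simp [topologicalClosure]

lemma isClosed_topologicalClosure (I : TwoSidedIdeal R) :
    IsClosed (I.topologicalClosure : Set R) := by
  simp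

lemma topologicalClosure_le {I J : TwoSidedIdeal R} (hIJ : I ≤ J) (hJ : IsClosed (J : Set R)) :
    I.topologicalClosure ≤ J := by
  intro x hx
  rw [← SetLike.mem_coe, coe_topologicalClosure] at hx
  exact closure_minimal hIJ hJ hx

end TwoSidedIdeal

section CStarAlgebra

variable {A : Type*} [CStarAlgebra A]

lemma add_ne_zero_of_mem_spectrum_star_mul_self (x : A) {ε : ℝ} (hε : 0 < ε) :
    ∀ t ∈ spectrum ℝ (star x * x), t + ε ≠ 0 :=
  fun t ht => (add_pos_of_nonneg_of_pos (spectrum_star_mul_self_nonneg t ht) hε).ne'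

lemma cfc_div_add_star_mul_self (x : A) {ε : ℝ} (hε : 0 < ε) :
    cfc (fun t : ℝ => ε / (t + ε)) (star x * x) =
      1 - star x * x * cfc (fun t : ℝ => (t + ε)⁻¹) (star x * x) := by
  have hne := add_ne_zero_of_mem_spectrum_star_mul_self x hε
  have hinv : ContinuousOn (fun t : ℝ => (t + ε)⁻¹) (spectrum ℝ (star x * x)) :=
    (continuousOn_id.add continuousOn_const).inv₀ hne
  have hmul : star x * x * cfc (fun t : ℝ => (t + ε)⁻¹) (star x * x) =
      cfc (fun t : ℝ => t * (t + ε)⁻¹) (star x * x) := by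
    rw [cfc_mul (fun t => t) _ _ (by fun_prop) hinv, cfc_id' ℝ (star x * x)]
  rw [hmul, ← cfc_const_one ℝ (star x * x),
    ← cfc_sub (fun _ => 1) (fun t => t * (t + ε)⁻¹) _ (by fun_prop)
      (continuousOn_id.mul hinv)]
  refine cfc_congr fun t ht => ?_
  field_simp [hne t ht]
  ring

lemma norm_cfc_div_add_mul_star_sq_le (x : A) {ε : ℝ} (hε : 0 < ε) :
    ‖cfc (fun t : ℝ => ε / (t + ε)) (star x * x) * star x‖ ^ 2 ≤ ε / 4 := by
  set a := star x * x
  set g := fun t : ℝ => ε / (t + ε)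
  have hg : ContinuousOn g (spectrum ℝ a) :=
    continuousOn_const.div (continuousOn_id.add continuousOn_const)
      (add_ne_zero_of_mem_spectrum_star_mul_self x hε)
  have hsa : IsSelfAdjoint (cfc g a) := cfc_predicate _ a
  have hsq : cfc g a * star x * star (cfc g a * star x) = cfc (fun t => g t * t * g t) a := by
    rw [star_mul, star_star, hsa.star_eq,
      cfc_mul (fun t => g t * t) g a (hg.mul continuousOn_id) hg,
      cfc_mul g (fun t => t) a hg (by fun_prop), cfc_id' ℝ a]
    simp only [a, mul_assoc]
  rw [sq, ← CStarRing.norm_self_mul_star, hsq]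
  refine norm_cfc_le (by positivity) fun t ht => ?_
  have ht0 : 0 ≤ t := spectrum_star_mul_self_nonneg t ht
  rw [Real.norm_of_nonneg (by positivity), div_mul_eq_mul_div, div_mul_div_comm,
    div_le_div_iff₀ (by positivity) (by norm_num)]
  -- `4 ε t ≤ (t + ε) ^ 2`
  nlinarith [sq_nonneg (t - ε), mul_pos hε hε]

lemma TwoSidedIdeal.star_mem_of_isClosed {I : TwoSidedIdeal A} (hI : IsClosed (I : Set A))
    {x : A} (hx : x ∈ I) : star x ∈ I := by
  rw [← SetLike.mem_coe, ← hI.closure_eq, Metric.mem_closure_iff]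
  intro δ hδ
  have hxx : star x * x ∈ I := I.mul_mem_left _ _ hx
  refine ⟨star x * x * cfc (fun t : ℝ => (t + δ ^ 2)⁻¹) (star x * x) * star x,
    I.mul_mem_right _ _ (I.mul_mem_right _ _ hxx), ?_⟩
  have hbound := norm_cfc_div_add_mul_star_sq_le x (pow_pos hδ 2)
  rw [cfc_div_add_star_mul_self x (pow_pos hδ 2), sub_mul, one_mul, ← dist_eq_norm] at hbound
  exact lt_of_pow_lt_pow_left₀ 2 hδ.le (by linarith [pow_pos hδ 2])

end CStarAlgebra

namespace StarAlgHom

lemma sub_apply_mem_of_mem_adjoin {R B : Type*} [CommSemiring R] [StarRing R] [Ring B]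
    [StarRing B] [Algebra R B] [StarModule R B] (Γ : B →⋆ₐ[R] B) {I : TwoSidedIdeal B}
    (hI : ∀ x ∈ I, star x ∈ I) {S : Set B} (hS : ∀ s ∈ S, s - Γ s ∈ I) {b : B}
    (hb : b ∈ StarAlgebra.adjoin R S) : b - Γ b ∈ I := by
  induction hb using StarAlgebra.adjoin_induction with
  | mem x hx => exact hS x hx
  | algebraMap r => simp [AlgHomClass.commutes, I.zero_mem]
  | add x y _ _ hx hy =>
    rw [map_add, add_sub_add_comm]
    exact I.add_mem hx hy
  | mul x y _ _ hx hy =>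
    rw [show x * y - Γ (x * y) = x * (y - Γ y) + (x - Γ x) * Γ y by rw [map_mul]; noncomm_ring]
    exact I.add_mem (I.mul_mem_left _ _ hy) (I.mul_mem_right _ _ hx)
  | star x _ hx =>
    rw [map_star, ← star_sub]
    exact hI _ hx

lemma ker_eq_of_sub_apply_mem {B : Type*} [CStarAlgebra B] (Γ : B →⋆ₐ[ℂ] B)
    {I : TwoSidedIdeal B} (hI : IsClosed (I : Set B)) (hIΓ : I ≤ TwoSidedIdeal.ker Γ)
    {S : Set B} (hS : ∀ s ∈ S, s - Γ s ∈ I)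
    (hgen : (StarAlgebra.adjoin ℂ S).topologicalClosure = ⊤) :
    TwoSidedIdeal.ker Γ = I := by
  have hsub : ∀ b, b - Γ b ∈ I := by
    intro b
    have hb : b ∈ closure (StarAlgebra.adjoin ℂ S : Set B) := by
      rw [← StarSubalgebra.topologicalClosure_coe, hgen]
      trivial
    refine closure_minimal (fun c hc => sub_apply_mem_of_mem_adjoin Γ
      (fun _ => TwoSidedIdeal.star_mem_of_isClosed hI) hS hc) ?_ hb
    exact hI.preimage (continuous_id.sub (map_continuous Γ))
  refine le_antisymm (fun b hb => ?_) hIΓ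
  simpa [(TwoSidedIdeal.mem_ker Γ).1 hb] using hsub b

end StarAlgHom

theorem stmt7_general {C B : Type*} [NormedRing C] [StarRing C]
    [NormedAlgebra ℂ C]
    [NormedRing B] [StarRing B] [CStarRing B]
    [NormedAlgebra ℂ B] [StarModule ℂ B] [CompleteSpace B]
    (A : StarSubalgebra ℂ B)
    (Γ : B →⋆ₐ[ℂ] B) (hΓfix : ∀ a ∈ A, Γ a = a)
    (ψ : C →ₗ[ℂ] B)
    (π : C →⋆ₐ[ℂ] B) (hπA : ∀ t, π t ∈ A)
    (hfact : ∀ t, Γ (ψ t) = π t)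
    (hgen : (StarAlgebra.adjoin ℂ (Set.range ψ)).topologicalClosure = ⊤) :
    {x : B | Γ x = 0} =
      closure ((TwoSidedIdeal.span (Set.range fun t => ψ t - π t) : TwoSidedIdeal B) : Set B) := by
  let _ : CStarAlgebra B := {}
  set I := TwoSidedIdeal.span (Set.range fun t => ψ t - π t)
  set J := I.topologicalClosure
  have hJΓ : J ≤ TwoSidedIdeal.ker Γ := by
    refine TwoSidedIdeal.topologicalClosure_le (TwoSidedIdeal.span_le.2 ?_)
      (TwoSidedIdeal.isClosed_ker Γ)
    rintro _ ⟨t, rfl⟩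
    simp [TwoSidedIdeal.mem_ker, hfact, hΓfix _ (hπA t)]
  have hψJ : ∀ s ∈ Set.range ψ, s - Γ s ∈ J := by
    rintro _ ⟨t, rfl⟩
    rw [hfact, ← SetLike.mem_coe, TwoSidedIdeal.coe_topologicalClosure]
    exact subset_closure (TwoSidedIdeal.subset_span ⟨t, rfl⟩)
  rw [← I.coe_topologicalClosure,
    ← StarAlgHom.ker_eq_of_sub_apply_mem Γ I.isClosed_topologicalClosure hJΓ hψJ hgen]
  exact Set.ext fun x => (TwoSidedIdeal.mem_ker Γ).symm

/-- Let `Γ : B → A` be a surjective ⋆-homomorphism onto a C*-subalgebra `A ⊆ B` fixing `A`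
pointwise, `π : C → A` a unital ⋆-homomorphism and `ψ : C → B` a unital linear map with
`Γ ∘ ψ = π`, and suppose `B` is generated as a C*-algebra by the image of `ψ`.  Then
`ker Γ` is exactly the smallest closed two-sided ideal of `B` containing
`{ψ(t) − π(t) : t ∈ C}`, i.e. the closure of the two-sided ideal spanned by this set. -/
theorem stmt7 {C B : Type*} [NormedRing C] [StarRing C] [CStarRing C]
    [NormedAlgebra ℂ C] [StarModule ℂ C] [CompleteSpace C]
    [NormedRing B] [StarRing B] [CStarRing B]
    [NormedAlgebra ℂ B] [StarModule ℂ B] [CompleteSpace B]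
    (A : StarSubalgebra ℂ B)
    (Γ : B →⋆ₐ[ℂ] B) (hΓrange : ∀ b, Γ b ∈ A) (hΓfix : ∀ a ∈ A, Γ a = a)
    (ψ : C →ₗ[ℂ] B) (hψ1 : ψ 1 = 1)
    (π : C →⋆ₐ[ℂ] B) (hπ1 : π 1 = 1) (hπA : ∀ t, π t ∈ A)
    (hfact : ∀ t, Γ (ψ t) = π t)
    (hgen : (StarAlgebra.adjoin ℂ (Set.range ψ)).topologicalClosure = ⊤) :
    {x : B | Γ x = 0} =
      closure ((TwoSidedIdeal.span (Set.range fun t => ψ t - π t) : TwoSidedIdeal B) : Set B) :=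
  stmt7_general A Γ hΓfix ψ π hπA hfact hgen
end
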